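/- For any weights p_{s,i} ≥ 0 with ∑_i p_{s,i} = 1 for each s, and 0 < δ ≤ 1/d, the minimum over probability vectors φ of ∑_{s=1}^S ∑_{i=1}^d p_{s,i} D_{1/2}(e_i^δ, φ) equals S·(H_{1/2}(U^{δd}(p̄)) - H_{1/2}(U^{δd}(e_1))), where p̄_i = (1/S)∑_s p_{s,i}, achieved at φ = U^{δd}(p̄) = (1-δd)p̄ + δ𝟙. -/
import Mathlib


/-- Coordinate-wise mixture with weight δd toward uniform: `U^{δd}(p) = (1-δd)p + δ𝟙`. -/
noncomputable def mixU {d : ℕ} (δ : ℝ) (p : Fin d → ℝ) : Fin d → ℝ :=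
  fun k => (1 - δ * d) * p k + δ

/-- Beta-divergence with parameter q = 1/2. -/
noncomputable def betaDivHalf {d : ℕ} (x y : Fin d → ℝ) : ℝ :=
  2 * ∑ k, (-2 * Real.sqrt (x k) + Real.sqrt (y k) + x k / Real.sqrt (y k))

/-- Scaled Tsallis entropy with q = 1/2. -/
noncomputable def tsallisHalf {d : ℕ} (p : Fin d → ℝ) : ℝ :=
  4 * ((∑ k, Real.sqrt (p k)) - 1)

lemma sum_sqrt_mixU_e {d : ℕ} (δ : ℝ) (i : Fin d) :
    ∑ k, Real.sqrt (mixU δ (fun k => if k = i then (1:ℝ) else 0) k)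
      = Real.sqrt (1 - δ * d + δ) + ((d:ℝ) - 1) * Real.sqrt δ := by
  have h : ∀ k : Fin d,
      Real.sqrt (mixU δ (fun k => if k = i then (1:ℝ) else 0) k)
      = (if k = i then Real.sqrt (1 - δ * d + δ) - Real.sqrt δ else 0) + Real.sqrt δ := by
    intro k
    by_cases h : k = i
    · have e1 : mixU δ (fun k => if k = i then (1:ℝ) else 0) k = 1 - δ * d + δ := by
        simp [mixU, h]
      rw [e1, if_pos h]; ring
    · have e1 : mixU δ (fun k => if k = i then (1:ℝ) else 0) k = δ := by
        simp [mixU, h]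
      rw [e1, if_neg h]; ring
  rw [Finset.sum_congr rfl (fun k _ => h k), Finset.sum_add_distrib,
    Finset.sum_ite_eq' Finset.univ i, Finset.sum_const]
  simp
  ring

lemma F_formula {d S : ℕ} (δ : ℝ) (p : Fin S → Fin d → ℝ)
    (hp1 : ∀ s, ∑ i, p s i = 1) (y : Fin d → ℝ) :
    (∑ s, ∑ i, p s i * betaDivHalf (mixU δ (fun k => if k = i then (1:ℝ) else 0)) y)
    = 2 * S * (-2 * (Real.sqrt (1 - δ * d + δ) + ((d:ℝ) - 1) * Real.sqrt δ)
        + ∑ k, Real.sqrt (y k))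
      + 2 * ∑ k, (∑ s, ((1 - δ * d) * p s k + δ)) / Real.sqrt (y k) := by
  set E := Real.sqrt (1 - δ * d + δ) + ((d:ℝ) - 1) * Real.sqrt δ with hE
  set B := ∑ k, Real.sqrt (y k) with hB
  have hw : ∀ s k, (∑ i, p s i * mixU δ (fun k' => if k' = i then (1:ℝ) else 0) k)
      = (1 - δ * d) * p s k + δ := by
    intro s k
    have h : ∀ i : Fin d, p s i * mixU δ (fun k' => if k' = i then (1:ℝ) else 0) k
        = (if k = i then (1 - δ * d) * p s k else 0) + δ * p s i := by
      intro i
      by_cases h : k = i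
      · subst h; simp [mixU]; ring
      · simp [mixU, h]; ring
    rw [Finset.sum_congr rfl (fun i _ => h i), Finset.sum_add_distrib,
      Finset.sum_ite_eq Finset.univ k, ← Finset.mul_sum, hp1 s]
    simp
  have hs : ∀ s, (∑ i, p s i * betaDivHalf (mixU δ (fun k => if k = i then (1:ℝ) else 0)) y)
      = 2 * (-2 * E + B)
        + 2 * ∑ k, ((1 - δ * d) * p s k + δ) / Real.sqrt (y k) := by
    intro s
    have hdiv : ∀ i : Fin d, betaDivHalf (mixU δ (fun k => if k = i then (1:ℝ) else 0)) y
        = 2 * (-2 * E + B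
            + ∑ k, mixU δ (fun k' => if k' = i then (1:ℝ) else 0) k / Real.sqrt (y k)) := by
      intro i
      unfold betaDivHalf
      rw [Finset.sum_add_distrib, Finset.sum_add_distrib, ← Finset.mul_sum,
        sum_sqrt_mixU_e δ i, ← hE, ← hB]
    have key : ∀ i : Fin d,
        p s i * betaDivHalf (mixU δ (fun k => if k = i then (1:ℝ) else 0)) y
        = 2 * (-2 * E + B) * p s i
          + 2 * (p s i * ∑ k, mixU δ (fun k' => if k' = i then (1:ℝ) else 0) k / Real.sqrt (y k)) := by
      intro i; rw [hdiv i]; ring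
    rw [Finset.sum_congr rfl (fun i _ => key i), Finset.sum_add_distrib,
      ← Finset.mul_sum, hp1 s, ← Finset.mul_sum]
    have hT : (∑ i, p s i * ∑ k, mixU δ (fun k' => if k' = i then (1:ℝ) else 0) k / Real.sqrt (y k))
        = ∑ k, ((1 - δ * d) * p s k + δ) / Real.sqrt (y k) := by
      have h1 : ∀ i : Fin d, p s i * ∑ k, mixU δ (fun k' => if k' = i then (1:ℝ) else 0) k / Real.sqrt (y k)
          = ∑ k, (p s i * mixU δ (fun k' => if k' = i then (1:ℝ) else 0) k) / Real.sqrt (y k) := by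
        intro i
        rw [Finset.mul_sum]
        exact Finset.sum_congr rfl fun k _ => by rw [mul_div_assoc]
      rw [Finset.sum_congr rfl (fun i _ => h1 i), Finset.sum_comm]
      refine Finset.sum_congr rfl fun k _ => ?_
      rw [← Finset.sum_div, hw s k]
    rw [hT]
    ring
  rw [Finset.sum_congr rfl (fun s _ => hs s), Finset.sum_add_distrib, Finset.sum_const,
    Finset.card_univ, ← Finset.mul_sum, Finset.sum_comm]
  have h2 : (∑ k, ∑ s, ((1 - δ * d) * p s k + δ) / Real.sqrt (y k))
      = ∑ k, (∑ s, ((1 - δ * d) * p s k + δ)) / Real.sqrt (y k) := by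
    exact Finset.sum_congr rfl fun k _ => by rw [← Finset.sum_div]
  rw [h2]
  simp [Fintype.card_fin]
  ring

theorem weighted_betaDiv_min_value
    (d S : ℕ) (hd : 2 ≤ d) (hS : 1 ≤ S) (δ : ℝ) (hδ0 : 0 < δ) (hδ1 : δ ≤ 1 / d)
    (p : Fin S → Fin d → ℝ) (hp0 : ∀ s i, 0 ≤ p s i) (hp1 : ∀ s, ∑ i, p s i = 1) :
    (∑ s, ∑ i, p s i * betaDivHalf (mixU δ (fun k => if k = i then 1 else 0))
          (mixU δ (fun k => (1 / (S : ℝ)) * ∑ s', p s' k)))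
        = S * (tsallisHalf (mixU δ (fun k => (1 / (S : ℝ)) * ∑ s', p s' k))
            - tsallisHalf (mixU δ (fun k => if k = (⟨0, by omega⟩ : Fin d) then 1 else 0))) ∧
      ∀ φ : Fin d → ℝ, (∀ i, 0 < φ i) → (∑ i, φ i) = 1 →
        (∑ s, ∑ i, p s i * betaDivHalf (mixU δ (fun k => if k = i then 1 else 0))
            (mixU δ (fun k => (1 / (S : ℝ)) * ∑ s', p s' k)))
          ≤ ∑ s, ∑ i, p s i * betaDivHalf (mixU δ (fun k => if k = i then 1 else 0)) φ := by
  have hd0 : (0:ℝ) < d := by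
    have : 0 < d := by omega
    exact_mod_cast this
  have hS0 : (0:ℝ) < S := by
    have : 0 < S := by omega
    exact_mod_cast this
  have hδd : δ * d ≤ 1 := by
    have h := mul_le_mul_of_nonneg_right hδ1 hd0.le
    rwa [one_div, inv_mul_cancel₀ hd0.ne'] at h
  set q : Fin d → ℝ := mixU δ (fun k => (1 / (S : ℝ)) * ∑ s', p s' k) with hq
  have hqpos : ∀ k, 0 < q k := by
    intro k
    have hp' : 0 ≤ (1 / (S:ℝ)) * ∑ s', p s' k := by
      apply mul_nonneg (by positivity)
      exact Finset.sum_nonneg fun s _ => hp0 s k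
    have h1 : 0 ≤ (1 - δ * d) * ((1 / (S:ℝ)) * ∑ s', p s' k) :=
      mul_nonneg (by linarith) hp'
    rw [hq]
    simp only [mixU]
    linarith
  have hQ : ∀ k, (∑ s, ((1 - δ * d) * p s k + δ)) = S * q k := by
    intro k
    rw [Finset.sum_add_distrib, ← Finset.mul_sum, Finset.sum_const, Finset.card_univ,
      Fintype.card_fin, hq]
    simp only [mixU]
    field_simp
    ring
  have hE1 : (∑ k, Real.sqrt (mixU δ (fun k => if k = (⟨0, by omega⟩ : Fin d) then (1:ℝ) else 0) k))
      = Real.sqrt (1 - δ * d + δ) + ((d:ℝ) - 1) * Real.sqrt δ := sum_sqrt_mixU_e δ _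
  have h1 : ∀ k, (∑ s, ((1 - δ * d) * p s k + δ)) / Real.sqrt (q k) = S * Real.sqrt (q k) := by
    intro k
    rw [hQ k, mul_div_assoc, Real.div_sqrt]
  constructor
  · rw [F_formula δ p hp1]
    rw [Finset.sum_congr rfl (fun k _ => h1 k), ← Finset.mul_sum]
    unfold tsallisHalf
    rw [hE1]
    ring
  · intro φ hφpos hφ1
    rw [F_formula δ p hp1, F_formula δ p hp1]
    have h2 : ∀ k, (∑ s, ((1 - δ * d) * p s k + δ)) / Real.sqrt (φ k)
        = S * (q k / Real.sqrt (φ k)) := by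
      intro k; rw [hQ k, mul_div_assoc]
    rw [Finset.sum_congr rfl (fun k _ => h1 k), Finset.sum_congr rfl (fun k _ => h2 k),
      ← Finset.mul_sum, ← Finset.mul_sum]
    have key : ∀ k, 2 * Real.sqrt (q k) ≤ Real.sqrt (φ k) + q k / Real.sqrt (φ k) := by
      intro k
      have ha : 0 < Real.sqrt (φ k) := Real.sqrt_pos.2 (hφpos k)
      have hb : Real.sqrt (q k) ^ 2 = q k := Real.sq_sqrt (hqpos k).le
      have hsq := sq_nonneg (Real.sqrt (q k) - Real.sqrt (φ k))
      have h3 : Real.sqrt (φ k) + q k / Real.sqrt (φ k)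
          = (Real.sqrt (φ k) * Real.sqrt (φ k) + q k) / Real.sqrt (φ k) := by
        field_simp
      rw [h3, le_div_iff₀ ha]
      nlinarith [hsq, hb]
    have hsum : (∑ k, 2 * Real.sqrt (q k))
        ≤ ∑ k, (Real.sqrt (φ k) + q k / Real.sqrt (φ k)) :=
      Finset.sum_le_sum fun k _ => key k
    rw [Finset.sum_add_distrib, ← Finset.mul_sum] at hsum
    nlinarith [mul_nonneg hS0.le (sub_nonneg.2 hsum)]
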